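/- Let Λ be a λ-synchronizing subshift. The right one-sided shift space X_Λ is perfect (has no isolated points) if and only if the λ-synchronizing λ-graph system 𝔏^{λ(Λ)} satisfies condition (I), i.e. for every vertex v the set Γ_∞^+(v) of infinite label sequences starting at v contains at least two distinct sequences. -/

import Mathlib

open scoped Classical

/-- The language of a subshift over alphabet `A`: nonempty, factorial
(closed under subwords) and extendable on both sides. -/
structure ShiftLang (A : Type*) where
  L : Set (List A)
  nil_mem : [] ∈ L
  factor : ∀ u v w : List A, u ++ v ++ w ∈ L → v ∈ L
  ext_left : ∀ w ∈ L, ∃ a : A, (a :: w) ∈ L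
  ext_right : ∀ w ∈ L, ∃ a : A, (w ++ [a]) ∈ L

namespace ShiftLang

variable {A : Type*} (Λ : ShiftLang A)

/-- Admissible words of length `l`. -/
def B (l : ℕ) : Set (List A) := {w | w ∈ Λ.L ∧ w.length = l}

/-- `Γ_l^-(μ)`: admissible words `ν` of length `l` with `νμ` admissible. -/
def Γminus (l : ℕ) (μ : List A) : Set (List A) := {ν | ν ∈ Λ.B l ∧ ν ++ μ ∈ Λ.L}

/-- `Γ_*^+(μ)`: followers of `μ`. -/
def Γplus (μ : List A) : Set (List A) := {ω | μ ++ ω ∈ Λ.L}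

/-- `S_l(Λ)`: the set of `l`-synchronizing words. -/
def Sync (l : ℕ) : Set (List A) :=
  {μ | μ ∈ Λ.L ∧ ∀ ω ∈ Λ.Γplus μ, Λ.Γminus l μ = Λ.Γminus l (μ ++ ω)}

/-- Irreducibility of a subshift in terms of its language. -/
def Irreducible : Prop := ∀ μ ∈ Λ.L, ∀ ν ∈ Λ.L, ∃ η, μ ++ η ++ ν ∈ Λ.L

/-- `λ`-synchronization of a subshift. -/
def IsLambdaSync : Prop :=
  ∀ l : ℕ, ∀ η ∈ Λ.B l, ∀ k : ℕ, l ≤ k → ∃ ν ∈ Λ.Sync k, η ++ ν ∈ Λ.Sync (k - l)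

/-- `μ ≻ ν` : there is `η` with `Γ_*^+(ν) = Γ_*^+(μην)`. -/
def Succ (μ ν : List A) : Prop := ∃ η, Λ.Γplus ν = Λ.Γplus (μ ++ η ++ ν)

/-- Synchronizing transitivity. -/
def SyncTransitive : Prop := ∀ μ ∈ Λ.L, ∀ ν ∈ Λ.L, Λ.Succ μ ν ∧ Λ.Succ ν μ

/-- The right one-sided shift space `X_Λ`. -/
def X : Set (ℕ → A) := {x | ∀ n : ℕ, (List.ofFn fun i : Fin n => x i) ∈ Λ.L}

end ShiftLang

/-- A (left-resolving–free) `λ`-graph system: a labeled Bratteli diagram with `ι`-maps. -/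
structure LGS (A : Type*) where
  V : ℕ → Type
  edge : ∀ l : ℕ, V l → A → V (l + 1) → Prop
  ι : ∀ l : ℕ, V (l + 1) → V l
  ι_surj : ∀ l, Function.Surjective (ι l)
  exists_succ : ∀ l (v : V l), ∃ a u, edge l v a u
  exists_pred : ∀ l (u : V (l + 1)), ∃ a v, edge l v a u
  local_prop : ∀ l (u : V l) (v : V (l + 2)) (a : A),
    (∃ w, edge (l + 1) w a v ∧ ι l w = u) ↔ edge l u a (ι (l + 1) v)

namespace LGS

variable {A : Type*} (G : LGS A)

/-- Labeled paths in a `λ`-graph system. -/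
inductive Path : ∀ {l m : ℕ}, G.V l → List A → G.V m → Prop
  | nil {l : ℕ} (v : G.V l) : Path v [] v
  | cons {l m : ℕ} {v : G.V l} {a : A} {u : G.V (l + 1)} {w : List A} {x : G.V m} :
      G.edge l v a u → Path u w x → Path v (a :: w) x

/-- The word `w` leaves the vertex `v`. -/
def Leaves {l : ℕ} (v : G.V l) (w : List A) : Prop := ∃ m, ∃ u : G.V m, G.Path v w u

/-- The vertex `v` launches the word `w`: `w` leaves `v` and no other vertex of `V_l`. -/
def Launches {l : ℕ} (v : G.V l) (w : List A) : Prop :=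
  G.Leaves v w ∧ ∀ v' : G.V l, G.Leaves v' w → v' = v

/-- Left-resolving: edges with the same label have distinct terminal vertices. -/
def LeftResolving : Prop :=
  ∀ (l : ℕ) (v v' : G.V l) (a : A) (u : G.V (l + 1)), G.edge l v a u → G.edge l v' a u → v = v'

/-- The predecessor set `Γ_l^-(v)` of a vertex: words of length `l` labeling paths from `V_0` to `v`. -/
def ΓminusV {l : ℕ} (v : G.V l) : Set (List A) :=
  {w | w.length = l ∧ ∃ v0 : G.V 0, G.Path v0 w v}

/-- Predecessor-separated: distinct vertices of `V_l` have distinct predecessor sets. -/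
def PredecessorSeparated : Prop := ∀ (l : ℕ) (u v : G.V l), G.ΓminusV u = G.ΓminusV v → u = v

/-- A `λ`-synchronizing `λ`-graph system: every vertex launches some word. -/
def LambdaSynchronizing : Prop := ∀ (l : ℕ) (v : G.V l), ∃ w : List A, G.Launches v w

/-- `G` presents the subshift `Λ`: the language of `Λ` is the set of words labeling paths of `G`. -/
def Presents (Λ : ShiftLang A) : Prop :=
  ∀ w : List A, w ∈ Λ.L ↔ ∃ (l : ℕ) (v : G.V l), G.Leaves v w

/-- Iterated `ι`-map `ι^n : V_{l+n} → V_l`. -/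
def iotaPow : ∀ (n : ℕ) {l : ℕ}, G.V (l + n) → G.V l
  | 0, _, v => v
  | n + 1, l, v => iotaPow n (G.ι (l + n) v)

/-- `ι`-irreducibility of a `λ`-graph system. -/
def IotaIrreducible : Prop :=
  ∀ (l : ℕ) (v u : G.V l) (γ : List A) (t : G.V (l + γ.length)), G.Path u γ t →
    ∃ (n : ℕ) (u' : G.V (l + n)) (w : List A) (t' : G.V (l + n + γ.length)),
      G.iotaPow n u' = u ∧ G.Path v w u' ∧ G.Path u' γ t' ∧
      G.iotaPow n (cast (congrArg G.V (Nat.add_right_comm l n γ.length)) t') = t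

/-- `λ`-irreducibility of a `λ`-graph system. -/
def LambdaIrreducible : Prop :=
  ∀ (l : ℕ) (u v : G.V l), ∃ L : ℕ, ∀ w : G.V (l + L),
    G.iotaPow L w = u → ∃ γ : List A, G.Path v γ w

/-- `Γ_∞^+(v)`: infinite label sequences of infinite paths starting at `v`. -/
def GammaInf {l : ℕ} (v : G.V l) : Set (ℕ → A) :=
  {x | ∃ vs : ∀ n : ℕ, G.V (l + n), vs 0 = v ∧ ∀ n, G.edge (l + n) (vs n) (x n) (vs (n + 1))}

/-- Condition (I): every vertex has at least two distinct infinite follower label sequences. -/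
def ConditionI : Prop := ∀ (l : ℕ) (v : G.V l), ∃ x ∈ G.GammaInf v, ∃ y ∈ G.GammaInf v, x ≠ y

/-- `G` is (isomorphic to) the `λ`-synchronizing `λ`-graph system `𝔏^{λ(Λ)}` of `Λ`:
vertices of `V_l` correspond to `l`-past equivalence classes of `l`-synchronizing words
(identified via their predecessor sets), and edges are as in the canonical construction. -/
def IsLambdaSyncSystem (Λ : ShiftLang A) : Prop :=
  (∀ (l : ℕ) (v : G.V l), ∃ μ ∈ Λ.Sync l, G.ΓminusV v = Λ.Γminus l μ) ∧
  (∀ l : ℕ, ∀ μ ∈ Λ.Sync l, ∃ v : G.V l, G.ΓminusV v = Λ.Γminus l μ) ∧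
  (∀ (l : ℕ) (v : G.V l) (a : A) (u : G.V (l + 1)),
    G.edge l v a u ↔ ∃ ν ∈ Λ.Sync (l + 1), (a :: ν) ∈ Λ.L ∧
      G.ΓminusV u = Λ.Γminus (l + 1) ν ∧ G.ΓminusV v = Λ.Γminus l (a :: ν))

end LGS

/-- The partial isometry `S_w = S_{w_1} ⋯ S_{w_k}` associated with a word. -/
def sword {A R : Type*} [Monoid R] (S : A → R) (w : List A) : R := (w.map S).prod

/-!
Words are read along paths of `𝔏^{λ(Λ)}`: if `v` is the vertex of an `l`-synchronizing word `μ`,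
every admissible word `μη` labels a path from `v` (extend `μη` to the right by a synchronizing word
and peel off one letter at a time, each time landing on the vertex of the remaining synchronizing
suffix), and since every vertex has an outgoing edge, `Γ_∞^+(v)` contains a sequence beginning with
`μη`. Hence if `Γ_∞^+(v) = {x}`, every `y ∈ X_Λ` beginning with `μ` agrees with `x` on each prefix,
so `x` is isolated in `X_Λ`. Conversely, the prefix `w` of length `n` of `z ∈ X_Λ` is a predecessor
of the vertex `u` of a synchronizing extension of `w`; two distinct `α, β ∈ Γ_∞^+(u)` give two
distinct points `wα, wβ` of `X_Λ` in the `n`-cylinder of `z`, one of which differs from `z`.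
-/

namespace ShiftLang

variable {A : Type*} {Λ : ShiftLang A}

theorem mem_L_of_append_left {u v : List A} (h : u ++ v ∈ Λ.L) : u ∈ Λ.L :=
  Λ.factor [] u v (by simpa using h)

theorem mem_L_of_append_right {u v : List A} (h : u ++ v ∈ Λ.L) : v ∈ Λ.L :=
  Λ.factor u v [] (by simpa using h)

theorem mem_L_of_prefix {u v : List A} (h : u <+: v) (hv : v ∈ Λ.L) : u ∈ Λ.L := by
  obtain ⟨t, rfl⟩ := h
  exact mem_L_of_append_left hv

theorem exists_length_eq_append_mem_L {w : List A} (hw : w ∈ Λ.L) (j : ℕ) :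
    ∃ ξ : List A, ξ.length = j ∧ ξ ++ w ∈ Λ.L := by
  induction j with
  | zero => exact ⟨[], rfl, hw⟩
  | succ j ih =>
    obtain ⟨ξ, hlen, hξ⟩ := ih
    obtain ⟨a, ha⟩ := Λ.ext_left _ hξ
    exact ⟨a :: ξ, by simp [hlen], ha⟩

theorem Γminus_nonempty {w : List A} (hw : w ∈ Λ.L) (j : ℕ) : (Λ.Γminus j w).Nonempty := by
  obtain ⟨ξ, hlen, hξ⟩ := exists_length_eq_append_mem_L hw j
  exact ⟨ξ, ⟨mem_L_of_append_left hξ, hlen⟩, hξ⟩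

theorem mem_Γminus_append_iff {j : ℕ} {ξ p ρ : List A} :
    ξ ∈ Λ.Γminus j (p ++ ρ) ↔ ξ.length = j ∧ ξ ++ p ∈ Λ.Γminus (j + p.length) ρ := by
  simp only [Γminus, B, Set.mem_ofPred_eq, List.length_append, List.append_assoc]
  constructor
  · rintro ⟨⟨-, rfl⟩, h⟩
    exact ⟨rfl, ⟨mem_L_of_append_left (by rwa [← List.append_assoc] at h), rfl⟩, h⟩
  · rintro ⟨rfl, ⟨h, -⟩, h'⟩
    exact ⟨⟨mem_L_of_append_left h, rfl⟩, h'⟩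

theorem append_mem_Sync {j : ℕ} {p ρ : List A} (hρ : ρ ∈ Λ.Sync (j + p.length))
    (h : p ++ ρ ∈ Λ.L) : p ++ ρ ∈ Λ.Sync j := by
  refine ⟨h, fun ω hω => Set.ext fun ξ => ?_⟩
  have hρω : ω ∈ Λ.Γplus ρ := mem_L_of_append_right (u := p) (by rwa [← List.append_assoc])
  rw [List.append_assoc, mem_Γminus_append_iff, mem_Γminus_append_iff, hρ.2 ω hρω]

-- Sequences are typed `Stream' A` (definitionally `ℕ → A`) where the `Stream'` API rewrites them.
theorem mem_X_iff_take {y : Stream' A} : y ∈ Λ.X ↔ ∀ n, Stream'.take n y ∈ Λ.L := by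
  have h (n : ℕ) : (List.ofFn fun i : Fin n => y i) = Stream'.take n y :=
    List.ext_getElem (by simp [Stream'.length_take]) (by simp [Stream'.get])
  change (∀ n : ℕ, (List.ofFn fun i : Fin n => y i) ∈ Λ.L) ↔ _
  simp only [h]

theorem mem_X_of_forall_take_add {y : Stream' A} (k : ℕ) (h : ∀ n, Stream'.take (k + n) y ∈ Λ.L) :
    y ∈ Λ.X :=
  mem_X_iff_take.2 fun n => mem_L_of_prefix (Stream'.take_prefix_take_left _ _ _ (by omega)) (h n)

end ShiftLang

section Cylinder

open PiNat

variable {A : Type*}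

theorem Stream'.take_eq_take_iff_mem_cylinder {y z : Stream' A} {n : ℕ} :
    Stream'.take n y = Stream'.take n z ↔ y ∈ cylinder z n := by
  refine ⟨fun h i hi => ?_, fun h => List.ext_getElem (by simp [Stream'.length_take]) ?_⟩
  · simpa [Stream'.getElem?_take hi, Stream'.get] using congrArg (·[i]?) h
  · intro i hi _
    simpa [Stream'.get] using h i (by simpa [Stream'.length_take] using hi)

theorem Stream'.append_take_mem_cylinder (z γ : Stream' A) (n : ℕ) :
    Stream'.take n z ++ₛ γ ∈ cylinder z n := by
  refine Stream'.take_eq_take_iff_mem_cylinder.1 ?_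
  rw [Stream'.take_append_of_le_length _ _ _ (Stream'.length_take n z).ge,
    List.take_of_length_le (Stream'.length_take n z).le]

variable [TopologicalSpace A] [DiscreteTopology A]

theorem cylinder_mem_nhds (z : ℕ → A) (n : ℕ) : cylinder z n ∈ nhds z :=
  (isOpen_cylinder _ z n).mem_nhds (self_mem_cylinder z n)

theorem exists_cylinder_subset_of_mem_nhds {z : ℕ → A} {U : Set (ℕ → A)} (hU : U ∈ nhds z) :
    ∃ n, cylinder z n ⊆ U := by
  obtain ⟨_, ⟨x, n, rfl⟩, hz, hsub⟩ :=
    (isTopologicalBasis_cylinders (fun _ : ℕ => A)).mem_nhds_iff.1 hU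
  exact ⟨n, mem_cylinder_iff_eq.1 hz ▸ hsub⟩

end Cylinder

namespace LGS

variable {A : Type*} {G : LGS A}

theorem Path.length_eq {l m : ℕ} {v : G.V l} {w : List A} {u : G.V m} (h : G.Path v w u) :
    m = l + w.length := by
  induction h with
  | nil => rfl
  | cons _ _ ih => simp only [ih, List.length_cons]; omega

theorem Path.append {l m k : ℕ} {v : G.V l} {p q : List A} {u : G.V m} {t : G.V k}
    (h₁ : G.Path v p u) (h₂ : G.Path u q t) : G.Path v (p ++ q) t := by
  induction h₁ with
  | nil => exact h₂
  | cons e _ ih => exact .cons e (ih h₂)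

theorem append_mem_ΓminusV {l m : ℕ} {v : G.V l} {u : G.V m} {ξ p : List A}
    (hξ : ξ ∈ G.ΓminusV v) (hp : G.Path v p u) : ξ ++ p ∈ G.ΓminusV u := by
  obtain ⟨-, v₀, h₀⟩ := hξ
  exact ⟨by simpa using ((h₀.append hp).length_eq).symm, v₀, h₀.append hp⟩

theorem path_take_of_edges {l : ℕ} (vs : ∀ n, G.V (l + n)) (x : Stream' A)
    (hE : ∀ n, G.edge (l + n) (vs n) (x n) (vs (n + 1))) (n : ℕ) :
    G.Path (vs 0) (Stream'.take n x) (vs n) := by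
  induction n with
  | zero => exact .nil _
  | succ n ih =>
    rw [Stream'.take_succ']
    exact ih.append (.cons (hE n) (.nil _))

theorem leaves_take {l : ℕ} {v : G.V l} {x : Stream' A} (hx : x ∈ G.GammaInf v) (n : ℕ) :
    G.Leaves v (Stream'.take n x) := by
  obtain ⟨vs, rfl, hE⟩ := hx
  exact ⟨_, _, path_take_of_edges vs x hE n⟩

theorem exists_edge_leaves_tail {J : ℕ} (u : G.V J) (w : List A) (hw : G.Leaves u w) :
    ∃ a, ∃ u' : G.V (J + 1), G.edge J u a u' ∧ G.Leaves u' w.tail ∧ ∀ c ∈ w.head?, a = c := by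
  rcases w with _ | ⟨c, w⟩
  · obtain ⟨a, u', e⟩ := G.exists_succ J u
    exact ⟨a, u', e, ⟨_, _, .nil u'⟩, by simp⟩
  · obtain ⟨m, t, h⟩ := hw
    cases h with
    | cons e p => exact ⟨c, _, e, ⟨m, t, p⟩, by simp⟩

/-- Follow the path labelled `w`, then continue forever along arbitrary edges. -/
theorem exists_mem_gammaInf_take_eq {l : ℕ} {v : G.V l} {w : List A} (hw : G.Leaves v w) :
    ∃ x : Stream' A, x ∈ G.GammaInf v ∧ Stream'.take w.length x = w := by
  choose a next hedge hnext hhead using @exists_edge_leaves_tail A G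
  let s : ∀ n, {p : G.V (l + n) × List A // G.Leaves p.1 p.2} := fun n =>
    Nat.rec (motive := fun n => {p : G.V (l + n) × List A // G.Leaves p.1 p.2}) ⟨(v, w), hw⟩
      (fun _ p => ⟨(next _ _ p.2, p.1.2.tail), hnext _ _ p.2⟩) n
  have hdrop (n : ℕ) : (s n).1.2 = w.drop n := by
    induction n with
    | zero => rfl
    | succ n ih =>
      change (s n).1.2.tail = _
      rw [ih, List.tail_drop]
  refine ⟨fun n => a _ _ (s n).2, ⟨fun n => (s n).1.1, rfl, fun n => hedge _ _ (s n).2⟩,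
    List.ext_getElem (Stream'.length_take _ _) fun i _ hi => ?_⟩
  refine (Stream'.take_get i w.length _ _).trans ?_
  exact hhead _ _ (s i).2 _ (by rw [hdrop, List.head?_drop, List.getElem?_eq_getElem hi]; rfl)

variable {Λ : ShiftLang A}

theorem ΓminusV_subset_L (hsys : G.IsLambdaSyncSystem Λ) {l : ℕ} (v : G.V l) :
    G.ΓminusV v ⊆ Λ.L := by
  obtain ⟨μ, -, hv⟩ := hsys.1 l v
  rw [hv]
  exact fun _ h => h.1.1

theorem mem_L_of_leaves (hsys : G.IsLambdaSyncSystem Λ) {l : ℕ} {v : G.V l} {p : List A}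
    (h : G.Leaves v p) : p ∈ Λ.L := by
  obtain ⟨μ, hμ, hv⟩ := hsys.1 l v
  obtain ⟨ξ, hξ⟩ := ShiftLang.Γminus_nonempty hμ.1 l
  obtain ⟨m, u, hp⟩ := h
  exact ShiftLang.mem_L_of_append_right
    (ΓminusV_subset_L hsys u (append_mem_ΓminusV (hv ▸ hξ) hp))

theorem gammaInf_subset_X (hsys : G.IsLambdaSyncSystem Λ) {l : ℕ} (v : G.V l) :
    G.GammaInf v ⊆ Λ.X := fun _ hx =>
  ShiftLang.mem_X_iff_take.2 fun n => mem_L_of_leaves hsys (leaves_take hx n)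

theorem append_mem_X (hsys : G.IsLambdaSyncSystem Λ) {l : ℕ} {v : G.V l} {ξ : List A}
    {x : Stream' A} (hξ : ξ ∈ G.ΓminusV v) (hx : x ∈ G.GammaInf v) : ξ ++ₛ x ∈ Λ.X := by
  refine ShiftLang.mem_X_of_forall_take_add ξ.length fun n => ?_
  obtain ⟨m, u, hp⟩ := leaves_take hx n
  rw [← Stream'.append_take]
  exact ΓminusV_subset_L hsys u (append_mem_ΓminusV hξ hp)

theorem exists_mem_ΓminusV (hsys : G.IsLambdaSyncSystem Λ) (hls : Λ.IsLambdaSync) {w : List A}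
    (hw : w ∈ Λ.L) : ∃ u : G.V w.length, w ∈ G.ΓminusV u := by
  obtain ⟨τ, hτ, hwτ⟩ := hls w.length w ⟨hw, rfl⟩ w.length le_rfl
  obtain ⟨u, hu⟩ := hsys.2.1 _ τ hτ
  exact ⟨u, by rw [hu]; exact ⟨⟨hw, rfl⟩, hwτ.1⟩⟩

theorem leaves_of_mem_Sync (hsys : G.IsLambdaSyncSystem Λ) {J : ℕ} {u : G.V J} {p τ : List A}
    (hτ : τ ∈ Λ.Sync (J + p.length)) (h : p ++ τ ∈ Λ.L)
    (hu : G.ΓminusV u = Λ.Γminus J (p ++ τ)) : G.Leaves u p := by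
  induction p generalizing J with
  | nil => exact ⟨J, u, .nil u⟩
  | cons c p ih =>
    rw [List.length_cons, ← Nat.add_assoc, Nat.add_right_comm] at hτ
    have hpτ : p ++ τ ∈ Λ.L := ShiftLang.mem_L_of_append_right (u := [c]) (v := p ++ τ) h
    have hν : p ++ τ ∈ Λ.Sync (J + 1) := ShiftLang.append_mem_Sync hτ hpτ
    obtain ⟨u', hu'⟩ := hsys.2.1 (J + 1) _ hν
    have e : G.edge J u c u' := (hsys.2.2 J u c u').2 ⟨_, hν, h, hu', hu⟩
    obtain ⟨m, t, hp⟩ := ih hτ hpτ hu'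
    exact ⟨m, t, .cons e hp⟩

theorem leaves_append_of_mem_Sync (hsys : G.IsLambdaSyncSystem Λ) (hls : Λ.IsLambdaSync)
    {l : ℕ} {v : G.V l} {μ η : List A} (hμ : μ ∈ Λ.Sync l)
    (hv : G.ΓminusV v = Λ.Γminus l μ) (h : μ ++ η ∈ Λ.L) : G.Leaves v (μ ++ η) := by
  obtain ⟨τ, hτ, hτ'⟩ := hls _ (μ ++ η) ⟨h, rfl⟩ (l + (μ ++ η).length) (Nat.le_add_left _ _)
  rw [Nat.add_sub_cancel] at hτ'
  refine leaves_of_mem_Sync hsys hτ hτ'.1 ?_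
  rw [hv, List.append_assoc]
  exact hμ.2 _ (show μ ++ (η ++ τ) ∈ Λ.L by rw [← List.append_assoc]; exact hτ'.1)

theorem eq_of_take_eq_of_gammaInf_subsingleton (hsys : G.IsLambdaSyncSystem Λ)
    (hls : Λ.IsLambdaSync) {l : ℕ} {v : G.V l} {μ : List A} (hμ : μ ∈ Λ.Sync l)
    (hv : G.ΓminusV v = Λ.Γminus l μ) (hsub : (G.GammaInf v).Subsingleton) {x y : Stream' A}
    (hx : x ∈ G.GammaInf v) (hy : y ∈ Λ.X) (hyμ : Stream'.take μ.length y = μ) : y = x := by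
  rw [← Stream'.append_take_drop μ.length y, hyμ]
  refine (Stream'.take_theorem _ _ fun n => ?_).symm
  have hμω : μ ++ Stream'.take n (y.drop μ.length) ∈ Λ.L := by
    have := ShiftLang.mem_X_iff_take.1 hy (μ.length + n)
    rwa [Stream'.take_add, hyμ] at this
  obtain ⟨x', hx', hx't⟩ :=
    exists_mem_gammaInf_take_eq (leaves_append_of_mem_Sync hsys hls hμ hv hμω)
  rw [List.length_append, Stream'.length_take, Stream'.append_take] at hx't
  rw [hsub hx hx', Stream'.take_eq_take_iff_mem_cylinder]
  exact PiNat.cylinder_anti _ (Nat.le_add_left _ _)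
    (Stream'.take_eq_take_iff_mem_cylinder.1 hx't)

theorem conditionI_of_preperfect_X [TopologicalSpace A] [DiscreteTopology A]
    (hsys : G.IsLambdaSyncSystem Λ) (hls : Λ.IsLambdaSync) (hperf : Preperfect Λ.X) :
    G.ConditionI := by
  intro l v
  by_contra hnt
  obtain ⟨μ, hμ, hv⟩ := hsys.1 l v
  obtain ⟨x, hx, hxμ⟩ := exists_mem_gammaInf_take_eq
    (leaves_append_of_mem_Sync hsys hls hμ hv (η := []) (by simpa using hμ.1))
  rw [List.append_nil] at hxμ
  obtain ⟨y, ⟨hyx, hyX⟩, hne⟩ := preperfect_iff_nhds.1 hperf x (gammaInf_subset_X hsys v hx) _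
    (cylinder_mem_nhds x μ.length)
  have hyμ : Stream'.take μ.length y = μ :=
    (Stream'.take_eq_take_iff_mem_cylinder.2 hyx).trans hxμ
  exact hne (eq_of_take_eq_of_gammaInf_subsingleton hsys hls hμ hv
    (Set.not_nontrivial_iff.1 hnt) hx hyX hyμ)

theorem preperfect_X_of_conditionI [TopologicalSpace A] [DiscreteTopology A]
    (hsys : G.IsLambdaSyncSystem Λ) (hls : Λ.IsLambdaSync) (hI : G.ConditionI) :
    Preperfect Λ.X := by
  refine preperfect_iff_nhds.2 fun z hz U hU => ?_
  obtain ⟨n, hn⟩ := exists_cylinder_subset_of_mem_nhds hU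
  obtain ⟨u, hu⟩ := exists_mem_ΓminusV hsys hls (ShiftLang.mem_X_iff_take.1 hz n)
  have hnt : (G.GammaInf u).Nontrivial := hI _ u
  obtain ⟨_, ⟨γ, hγ, rfl⟩, hne⟩ :=
    (hnt.image fun _ _ => Stream'.append_right_injective _ _ _).exists_ne z
  exact ⟨_, ⟨hn (Stream'.append_take_mem_cylinder z γ n), append_mem_X hsys hu hγ⟩, hne⟩

end LGS

theorem perfect_iff_conditionI_general {A : Type*} [TopologicalSpace A] [DiscreteTopology A]
    (G : LGS A) (Λ : ShiftLang A)
    (hls : Λ.IsLambdaSync) (hsys : G.IsLambdaSyncSystem Λ) :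
    Preperfect Λ.X ↔ G.ConditionI :=
  ⟨G.conditionI_of_preperfect_X hsys hls, G.preperfect_X_of_conditionI hsys hls⟩

/-- for a `λ`-synchronizing subshift `Λ`, the one-sided shift space `X_Λ` is
perfect (has no isolated points) if and only if `𝔏^{λ(Λ)}` satisfies condition (I). -/
theorem perfect_iff_conditionI {A : Type*} [TopologicalSpace A] [DiscreteTopology A]
    (G : LGS A) (Λ : ShiftLang A)
    (hirr : Λ.Irreducible) (hls : Λ.IsLambdaSync) (hsys : G.IsLambdaSyncSystem Λ) :
    Preperfect Λ.X ↔ G.ConditionI :=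
  perfect_iff_conditionI_general G Λ hls hsys
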